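/- Let E and F be GTESs over a signature Σ such that the GTRSs R⟨E,F⟩ and R⟨F,E⟩ are both total, and let W = ST(E ∪ F). Then ↔*_{E∪F} ⊆ ↔*_E ∪ ↔*_F if and only if for every p ∈ W, the ↔*_{E∪F}-class of p equals the ↔*_E-class of p or the ↔*_{E∪F}-class of p equals the ↔*_F-class of p. -/
import Mathlib


inductive GTerm (S : Type) (ar : S → ℕ) : Type
  | node (σ : S) (args : Fin (ar σ) → GTerm S ar) : GTerm S ar

/-- The congruence on the ground term algebra generated by a set of equations `E`:
the smallest equivalence relation containing `E` and compatible with all operations. -/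
inductive EqCong {S : Type} {ar : S → ℕ} (E : Set (GTerm S ar × GTerm S ar)) :
    GTerm S ar → GTerm S ar → Prop
  | base {s t : GTerm S ar} : (s, t) ∈ E → EqCong E s t
  | refl (t : GTerm S ar) : EqCong E t t
  | symm {s t : GTerm S ar} : EqCong E s t → EqCong E t s
  | trans {s t u : GTerm S ar} : EqCong E s t → EqCong E t u → EqCong E s u
  | lift {σ : S} {f g : Fin (ar σ) → GTerm S ar} :
      (∀ i, EqCong E (f i) (g i)) → EqCong E (GTerm.node σ f) (GTerm.node σ g)

/-- A congruence on the ground term algebra: an equivalence relation compatible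
with all operations. -/
def IsTermCongruence {S : Type} {ar : S → ℕ} (r : GTerm S ar → GTerm S ar → Prop) : Prop :=
  Equivalence r ∧
    ∀ (σ : S) (f g : Fin (ar σ) → GTerm S ar),
      (∀ i, r (f i) (g i)) → r (GTerm.node σ f) (GTerm.node σ g)

/-- `Subterm s t` : `s` is a subterm of `t`. -/
inductive Subterm {S : Type} {ar : S → ℕ} : GTerm S ar → GTerm S ar → Prop
  | refl (t : GTerm S ar) : Subterm t t
  | node {s : GTerm S ar} {σ : S} {f : Fin (ar σ) → GTerm S ar} (i : Fin (ar σ)) :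
      Subterm s (f i) → Subterm s (GTerm.node σ f)

/-- `ST E` : the set of all subterms of sides of equations of `E`. -/
def STSet {S : Type} {ar : S → ℕ} (E : Set (GTerm S ar × GTerm S ar)) : Set (GTerm S ar) :=
  {t | ∃ p ∈ E, Subterm t p.1 ∨ Subterm t p.2}

/-- The `Θ⟨G⟩`-class of `t` inside `W`. -/
def thCls {S : Type} {ar : S → ℕ} (G : Set (GTerm S ar × GTerm S ar))
    (W : Set (GTerm S ar)) (t : GTerm S ar) : Set (GTerm S ar) :=
  {u | u ∈ W ∧ EqCong G t u}

/-- `Θ⟨G⟩` as a set of pairs: the restriction of the generated congruence to `W × W`. -/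
def Theta {S : Type} {ar : S → ℕ} (G : Set (GTerm S ar × GTerm S ar))
    (W : Set (GTerm S ar)) : Set (GTerm S ar × GTerm S ar) :=
  {p | p.1 ∈ W ∧ p.2 ∈ W ∧ EqCong G p.1 p.2}

/-- `C⟨G⟩` : the set of `Θ⟨G⟩`-classes of elements of `W`, viewed as new constants. -/
def CCl {S : Type} {ar : S → ℕ} (G : Set (GTerm S ar × GTerm S ar))
    (W : Set (GTerm S ar)) : Set (Set (GTerm S ar)) :=
  {A | ∃ t ∈ W, A = thCls G W t}

/-- Terms over the signature extended with a type `C` of new constants. -/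
inductive XTerm (S : Type) (ar : S → ℕ) (C : Type) : Type
  | const (c : C) : XTerm S ar C
  | node (σ : S) (args : Fin (ar σ) → XTerm S ar C) : XTerm S ar C

abbrev XRule (S : Type) (ar : S → ℕ) (C : Type) : Type :=
  XTerm S ar C × XTerm S ar C

/-- Embedding of ground terms over `Σ` into the extended terms. -/
def GTerm.toX {S : Type} {ar : S → ℕ} {C : Type} : GTerm S ar → XTerm S ar C
  | .node σ f => .node σ (fun i => (f i).toX)

/-- The GTRS `R⟨G⟩` (relative to the subterm set `W`): its rules are exactly
`σ(t₁/Θ⟨G⟩, …, t_m/Θ⟨G⟩) → σ(t₁,…,t_m)/Θ⟨G⟩` for `σ(t₁,…,t_m) ∈ W`. -/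
def RRsys {S : Type} {ar : S → ℕ} (G : Set (GTerm S ar × GTerm S ar))
    (W : Set (GTerm S ar)) : Set (XRule S ar (Set (GTerm S ar))) :=
  {r | ∃ (σ : S) (ts : Fin (ar σ) → GTerm S ar),
      GTerm.node σ ts ∈ W ∧
      r = (XTerm.node σ (fun i => XTerm.const (thCls G W (ts i))),
           XTerm.const (thCls G W (GTerm.node σ ts)))}

/-- One-step rewriting by a GTRS `R`. -/
inductive Rew {S : Type} {ar : S → ℕ} {C : Type} (R : Set (XRule S ar C)) :
    XTerm S ar C → XTerm S ar C → Prop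
  | rule {l r : XTerm S ar C} : (l, r) ∈ R → Rew R l r
  | node {σ : S} {f g : Fin (ar σ) → XTerm S ar C} (i : Fin (ar σ)) :
      Rew R (f i) (g i) → (∀ j, j ≠ i → f j = g j) →
      Rew R (XTerm.node σ f) (XTerm.node σ g)

/-- `→*_R` : reflexive–transitive closure of one-step rewriting. -/
def RewStar {S : Type} {ar : S → ℕ} {C : Type} (R : Set (XRule S ar C)) :
    XTerm S ar C → XTerm S ar C → Prop :=
  Relation.ReflTransGen (Rew R)

/-- A GTRS is total (w.r.t. a set `Cst` of constants) if every `σ(a₁,…,a_m)` with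
`a₁,…,a_m ∈ Cst` is the left-hand side of some rule. -/
def TotalR {S : Type} {ar : S → ℕ} (R : Set (XRule S ar (Set (GTerm S ar))))
    (Cst : Set (Set (GTerm S ar))) : Prop :=
  ∀ (σ : S) (av : Fin (ar σ) → Set (GTerm S ar)), (∀ i, av i ∈ Cst) →
    ∃ rhs, (XTerm.node σ (fun i => XTerm.const (av i)), rhs) ∈ R

/-- An extended term containing no new constants, i.e. a ground term over `Σ`. -/
def IsGroundX {S : Type} {ar : S → ℕ} {C : Type} (t : XTerm S ar C) : Prop :=
  ∃ s : GTerm S ar, GTerm.toX s = t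

/-- `ProperExt b t` : `t = δ[b]` for some one-hole context `δ` over `Σ`
different from the hole itself. -/
inductive ProperExt {S : Type} {ar : S → ℕ} {C : Type} (b : XTerm S ar C) :
    XTerm S ar C → Prop
  | base {σ : S} {f : Fin (ar σ) → XTerm S ar C} (i : Fin (ar σ)) :
      f i = b → (∀ j, j ≠ i → IsGroundX (f j)) → ProperExt b (XTerm.node σ f)
  | step {σ : S} {f : Fin (ar σ) → XTerm S ar C} (i : Fin (ar σ)) :
      ProperExt b (f i) → (∀ j, j ≠ i → IsGroundX (f j)) → ProperExt b (XTerm.node σ f)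

/-- `R` reaches the constant `a` from a proper extension of the constant `b`. -/
def ReachesPE {S : Type} {ar : S → ℕ} (R : Set (XRule S ar (Set (GTerm S ar))))
    (a b : Set (GTerm S ar)) : Prop :=
  ∃ t, ProperExt (XTerm.const b) t ∧ RewStar R t (XTerm.const a)

/-- The arc relation `A[E;F]` of the auxiliary directed graph: `(a,b)` is an arc iff some
rule `σ(a₁,…,a_m) → a` of `R` has `b = aᵢ` for some `i`. -/
def AuxArc {S : Type} {ar : S → ℕ} (R : Set (XRule S ar (Set (GTerm S ar))))
    (a b : Set (GTerm S ar)) : Prop :=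
  ∃ (σ : S) (av : Fin (ar σ) → Set (GTerm S ar)) (i : Fin (ar σ)),
    (XTerm.node σ (fun j => XTerm.const (av j)), XTerm.const a) ∈ R ∧ av i = b

/-- `R1` keeps up with `Rall` writing the constant `a`. -/
def KeepsUp {S : Type} {ar : S → ℕ}
    (R1 Rall : Set (XRule S ar (Set (GTerm S ar))))
    (C1 : Set (Set (GTerm S ar))) (a : Set (GTerm S ar)) : Prop :=
  ∀ (σ : S) (av : Fin (ar σ) → Set (GTerm S ar)),
    (XTerm.node σ (fun i => XTerm.const (av i)), XTerm.const a) ∈ Rall →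
    ∀ bv : Fin (ar σ) → Set (GTerm S ar),
      (∀ i, bv i ∈ C1) → (∀ i, bv i ⊆ av i) →
      ∃ rhs, (XTerm.node σ (fun i => XTerm.const (bv i)), rhs) ∈ R1

/-- `R1` (with constant set `C1`) simulates `Rall` (with constant set `Call`) on `a`. -/
def SimulatesOn {S : Type} {ar : S → ℕ}
    (R1 Rall : Set (XRule S ar (Set (GTerm S ar))))
    (C1 Call : Set (Set (GTerm S ar))) (a : Set (GTerm S ar)) : Prop :=
  a ∈ C1 ∧ ∀ b ∈ Call, ReachesPE Rall a b → KeepsUp R1 Rall C1 b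

/-- `R⟨E,F⟩` and `R⟨F,E⟩` together simulate `R⟨E∪F,∅⟩`. -/
def TogetherSim {S : Type} {ar : S → ℕ}
    (E F : Set (GTerm S ar × GTerm S ar)) : Prop :=
  ∀ a ∈ CCl (E ∪ F) (STSet (E ∪ F)),
    SimulatesOn (RRsys E (STSet (E ∪ F))) (RRsys (E ∪ F) (STSet (E ∪ F)))
      (CCl E (STSet (E ∪ F))) (CCl (E ∪ F) (STSet (E ∪ F))) a ∨
    SimulatesOn (RRsys F (STSet (E ∪ F))) (RRsys (E ∪ F) (STSet (E ∪ F)))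
      (CCl F (STSet (E ∪ F))) (CCl (E ∪ F) (STSet (E ∪ F))) a


lemma EqCong.mono {S : Type} {ar : S → ℕ} {E G : Set (GTerm S ar × GTerm S ar)}
    (hEG : E ⊆ G) {s t : GTerm S ar} (h : EqCong E s t) : EqCong G s t := by
  induction h with
  | base h => exact .base (hEG h)
  | refl t => exact .refl t
  | symm _ ih => exact .symm ih
  | trans _ _ ih1 ih2 => exact .trans ih1 ih2
  | lift _ ih => exact .lift ih

lemma reachW {S : Type} {ar : S → ℕ} (E : Set (GTerm S ar × GTerm S ar))
    (W : Set (GTerm S ar)) (htot : TotalR (RRsys E W) (CCl E W)) (s : GTerm S ar) :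
    ∃ w ∈ W, EqCong E s w := by
  induction s with
  | node σ f ih =>
    choose w hwW hwE using ih
    obtain ⟨rhs, hr⟩ := htot σ (fun i => thCls E W (w i)) (fun i => ⟨w i, hwW i, rfl⟩)
    obtain ⟨σ', ts, hts, heq⟩ := hr
    rw [Prod.ext_iff] at heq
    obtain ⟨h1, _⟩ := heq
    injection h1 with hσ hf
    subst hσ
    rw [heq_iff_eq] at hf
    refine ⟨GTerm.node σ ts, hts, EqCong.lift fun i => ?_⟩
    have hci := congrFun hf i
    injection hci with hcl
    have hmem : w i ∈ thCls E W (ts i) := by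
      rw [← hcl]
      exact ⟨hwW i, EqCong.refl _⟩
    exact (hwE i).trans hmem.2.symm

theorem stmt_9 {S : Type} [Fintype S] {ar : S → ℕ} (hconst : ∃ c : S, ar c = 0)
    (E F : Set (GTerm S ar × GTerm S ar)) (hEfin : E.Finite) (hFfin : F.Finite)
    (htotE : TotalR (RRsys E (STSet (E ∪ F))) (CCl E (STSet (E ∪ F))))
    (htotF : TotalR (RRsys F (STSet (E ∪ F))) (CCl F (STSet (E ∪ F)))) :
    (∀ s t : GTerm S ar, EqCong (E ∪ F) s t → (EqCong E s t ∨ EqCong F s t)) ↔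
    (∀ p ∈ STSet (E ∪ F),
      {s | EqCong (E ∪ F) p s} = {s | EqCong E p s} ∨
      {s | EqCong (E ∪ F) p s} = {s | EqCong F p s}) := by
  constructor
  · intro h p _
    by_contra hcon
    push_neg at hcon
    obtain ⟨hne, hnf⟩ := hcon
    have hexE : ∃ s, EqCong (E ∪ F) p s ∧ ¬ EqCong E p s := by
      by_contra hc; push_neg at hc
      exact hne (Set.ext fun s =>
        ⟨hc s, fun hh => hh.mono Set.subset_union_left⟩)
    have hexF : ∃ t, EqCong (E ∪ F) p t ∧ ¬ EqCong F p t := by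
      by_contra hc; push_neg at hc
      exact hnf (Set.ext fun s =>
        ⟨hc s, fun hh => hh.mono Set.subset_union_right⟩)
    obtain ⟨s, hs, hsE⟩ := hexE
    obtain ⟨t, ht, htF⟩ := hexF
    have hsF : EqCong F p s := ((h p s hs).resolve_left hsE)
    have htE : EqCong E p t := ((h p t ht).resolve_right htF)
    rcases h s t (hs.symm.trans ht) with hst | hst
    · exact hsE (htE.trans hst.symm)
    · exact htF (hsF.trans hst)
  · intro h s t hst
    obtain ⟨w, hwW, hswE⟩ := reachW E (STSet (E ∪ F)) htotE s
    have hswEF : EqCong (E ∪ F) s w := hswE.mono Set.subset_union_left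
    have hwt : EqCong (E ∪ F) w t := hswEF.symm.trans hst
    rcases h w hwW with hE | hF
    · have : t ∈ {x | EqCong E w x} := hE ▸ hwt
      exact Or.inl (hswE.trans this)
    · have hws : s ∈ {x | EqCong F w x} := hF ▸ hswEF.symm
      have hwt' : t ∈ {x | EqCong F w x} := hF ▸ hwt
      exact Or.inr (hws.symm.trans hwt')
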